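/- Let T : X → Y be a bounded linear operator between Banach spaces, let A ⊆ X be a nonempty bounded set, and let ψ : X* → ℓ∞(A) denote the restriction mapping ψ(x*) = x*|_A. Then (1/2)·χ₀(T(A)) ≤ χ₀(ψ(T*(B_{Y*}))) ≤ 2·χ₀(T(A)), where χ₀(T(A)) is computed in Y and χ₀(ψ(T*(B_{Y*}))) in ℓ∞(A). -/

import Mathlib

open Filter Metric Set NormedSpace

noncomputable section

/-- The non-symmetrized Hausdorff distance `d̂(A,B) = sup_{a ∈ A} dist(a, B)`,
formulated with an abstract distance function `d`. -/
def hdD {Z : Type*} (d : Z → Z → ℝ) (A B : Set Z) : ℝ :=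
  ⨆ a : A, ⨅ b : B, d a b

/-- `χ₀(A) = inf { d̂(A,F) : F ⊆ A finite nonempty }`. -/
def chi0D {Z : Type*} (d : Z → Z → ℝ) (A : Set Z) : ℝ :=
  sInf {r | ∃ F : Set Z, F ⊆ A ∧ F.Finite ∧ F.Nonempty ∧ r = hdD d A F}

/-- The image of the dual unit ball under the adjoint operator `T*`. -/
def adjointBallImage (𝕜 : Type*) [RCLike 𝕜] {X Y : Type*} [NormedAddCommGroup X]
    [NormedSpace 𝕜 X] [NormedAddCommGroup Y] [NormedSpace 𝕜 Y] (T : X →L[𝕜] Y) :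
    Set (StrongDual 𝕜 X) :=
  {φ | ∃ ψ : StrongDual 𝕜 Y, ‖ψ‖ ≤ 1 ∧ φ = ψ.comp T}

/-!
Both inequalities are instances of one estimate for the bounded kernel `K x ψ = ψ (T x)` on
`A × B_{Y*}`. By Hahn–Banach, `‖T x - T x'‖` is the uniform distance of the rows `K x`, `K x'`,
while the distance in `ℓ∞(A)` of `ψ ∘ T|_A` and `ψ' ∘ T|_A` is the uniform distance of the columns.
If finitely many columns `g ∈ G` approximate every column within `r`, then the rows restricted to
`G` form a bounded subset of the finite-dimensional space `𝕜^G`, so finitely many rows approximate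
every row within `ε` on `G`, hence within `2 r + ε` everywhere by passing through a nearest column.
-/

section Chi0

variable {Z W : Type*} {d : Z → Z → ℝ} {s t F G : Set Z}

theorem iSup_subtype_image (f : W → Z) (s : Set W) (g : Z → ℝ) :
    ⨆ z : f '' s, g z = ⨆ w : s, g (f w) := by
  show sSup _ = sSup _
  congr 1
  ext
  simp

theorem iInf_subtype_image (f : W → Z) (s : Set W) (g : Z → ℝ) :
    ⨅ z : f '' s, g z = ⨅ w : s, g (f w) := by
  show sInf _ = sInf _
  congr 1
  ext
  simp

theorem hdD_image (f : W → Z) (s F : Set W) :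
    hdD d (f '' s) (f '' F) = hdD (fun x y => d (f x) (f y)) s F := by
  unfold hdD
  rw [iSup_subtype_image f s fun z => ⨅ y : ↥(f '' F), d z y]
  simp only [iInf_subtype_image f F]

theorem chi0D_image (f : W → Z) (s : Set W) :
    chi0D d (f '' s) = chi0D (fun x y => d (f x) (f y)) s := by
  unfold chi0D
  congr 1
  ext r
  rw [mem_ofPred_eq, exists_subset_image_finite_and]
  simp only [image_nonempty, hdD_image, mem_ofPred_eq]

theorem hdD_nonneg (hd : ∀ x y, 0 ≤ d x y) : 0 ≤ hdD d s F :=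
  Real.iSup_nonneg fun _ => Real.iInf_nonneg fun _ => hd _ _

theorem chi0D_le_hdD (hd : ∀ x y, 0 ≤ d x y) (hFs : F ⊆ s) (hF : F.Finite)
    (hFne : F.Nonempty) : chi0D d s ≤ hdD d s F :=
  csInf_le ⟨0, by rintro _ ⟨F', -, -, -, rfl⟩; exact hdD_nonneg hd⟩ ⟨F, hFs, hF, hFne, rfl⟩

theorem le_chi0D {r : ℝ} (hs : s.Nonempty)
    (h : ∀ F ⊆ s, F.Finite → F.Nonempty → r ≤ hdD d s F) : r ≤ chi0D d s := by
  obtain ⟨z, hz⟩ := hs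
  refine le_csInf
    ⟨_, {z}, singleton_subset_iff.2 hz, finite_singleton z, singleton_nonempty z, rfl⟩ ?_
  rintro _ ⟨F, hFs, hF, hFne, rfl⟩
  exact h F hFs hF hFne

theorem hdD_le {r : ℝ} (hF : F.Finite) (hr : 0 ≤ r) (h : ∀ x ∈ s, ∃ y ∈ F, d x y ≤ r) :
    hdD d s F ≤ r := by
  have : Finite F := hF.to_subtype
  refine Real.iSup_le (fun x => ?_) hr
  obtain ⟨y, hy, hxy⟩ := h x x.2
  exact ciInf_le_of_le (finite_range _).bddBelow ⟨y, hy⟩ hxy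

theorem exists_le_hdD {M : ℝ} (hG : G.Finite) (hGne : G.Nonempty)
    (hd : ∀ x ∈ t, ∀ y ∈ G, d x y ≤ M) {x : Z} (hx : x ∈ t) : ∃ y ∈ G, d x y ≤ hdD d t G := by
  have : Finite G := hG.to_subtype
  have : Nonempty G := hGne.to_subtype
  obtain ⟨y₀, hy₀⟩ := hGne
  have hbdd : BddAbove (range fun x : t => ⨅ y : G, d x y) :=
    ⟨M, forall_mem_range.2 fun x =>
      ciInf_le_of_le (finite_range _).bddBelow ⟨y₀, hy₀⟩ (hd x x.2 y₀ hy₀)⟩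
  obtain ⟨y, hy⟩ := exists_eq_ciInf_of_finite (f := fun y : G => d x y)
  exact ⟨y, y.2, hy.trans_le (le_ciSup hbdd ⟨x, hx⟩)⟩

end Chi0

theorem exists_finite_subset_forall_norm_sub_lt {α ι E : Type*} [Fintype ι]
    [SeminormedAddCommGroup E] [ProperSpace E] (v : α → ι → E) {s : Set α} (hs : s.Nonempty)
    (hv : Bornology.IsBounded (v '' s)) {ε : ℝ} (hε : 0 < ε) :
    ∃ F ⊆ s, F.Finite ∧ F.Nonempty ∧ ∀ a ∈ s, ∃ f ∈ F, ∀ i, ‖v a i - v f i‖ < ε := by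
  obtain ⟨F, hFs, hF, hcover⟩ := exists_subset_image_finite_and.1 <|
    finite_approx_of_totallyBounded (hv.isCompact_closure.totallyBounded.subset subset_closure) ε hε
  have hnear : ∀ a ∈ s, ∃ f ∈ F, dist (v a) (v f) < ε := fun a ha => by
    obtain ⟨_, ⟨f, hf, rfl⟩, hdist⟩ := mem_iUnion₂.1 (hcover (mem_image_of_mem v ha))
    exact ⟨f, hf, hdist⟩
  obtain ⟨a₀, ha₀⟩ := hs
  obtain ⟨f₀, hf₀, -⟩ := hnear a₀ ha₀
  refine ⟨F, hFs, hF, ⟨f₀, hf₀⟩, fun a ha => ?_⟩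
  obtain ⟨f, hf, hdist⟩ := hnear a ha
  exact ⟨f, hf, fun i => dist_eq_norm (v a i) (v f i) ▸ (dist_le_pi_dist _ _ i).trans_lt hdist⟩

section UniformDistOn

variable {α β E : Type*} [SeminormedAddCommGroup E]

def uniformDistOn (K : α → β → E) (t : Set β) (a a' : α) : ℝ :=
  ⨆ b : t, ‖K a b - K a' b‖

variable {K : α → β → E} {s : Set α} {t : Set β} {M : ℝ}

theorem uniformDistOn_nonneg (a a' : α) : 0 ≤ uniformDistOn K t a a' :=
  Real.iSup_nonneg fun _ => norm_nonneg _

theorem norm_sub_le_add_of_forall_norm_le {a a' : α} (ha : ∀ b ∈ t, ‖K a b‖ ≤ M)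
    (ha' : ∀ b ∈ t, ‖K a' b‖ ≤ M) {b : β} (hb : b ∈ t) : ‖K a b - K a' b‖ ≤ M + M :=
  (norm_sub_le _ _).trans (add_le_add (ha b hb) (ha' b hb))

theorem norm_sub_le_uniformDistOn {a a' : α} (ha : ∀ b ∈ t, ‖K a b‖ ≤ M)
    (ha' : ∀ b ∈ t, ‖K a' b‖ ≤ M) {b : β} (hb : b ∈ t) :
    ‖K a b - K a' b‖ ≤ uniformDistOn K t a a' :=
  le_ciSup (f := fun b : t => ‖K a b - K a' b‖)
    ⟨M + M, forall_mem_range.2 fun b => norm_sub_le_add_of_forall_norm_le ha ha' b.2⟩ ⟨b, hb⟩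

theorem uniformDistOn_le {a a' : α} (hM : 0 ≤ M) (ha : ∀ b ∈ t, ‖K a b‖ ≤ M)
    (ha' : ∀ b ∈ t, ‖K a' b‖ ≤ M) : uniformDistOn K t a a' ≤ M + M :=
  Real.iSup_le (fun b => norm_sub_le_add_of_forall_norm_le ha ha' b.2) (add_nonneg hM hM)

theorem norm_sub_le_of_uniformDistOn_le {r ε : ℝ} (hK : ∀ a ∈ s, ∀ b ∈ t, ‖K a b‖ ≤ M)
    {a a' : α} (ha : a ∈ s) (ha' : a' ∈ s) {b b' : β} (hb : b ∈ t) (hb' : b' ∈ t)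
    (hbb' : uniformDistOn (fun b a => K a b) s b b' ≤ r) (haa' : ‖K a b' - K a' b'‖ ≤ ε) :
    ‖K a b - K a' b‖ ≤ 2 * r + ε := by
  have hKb : ∀ x ∈ s, ‖K x b‖ ≤ M := fun x hx => hK x hx b hb
  have hKb' : ∀ x ∈ s, ‖K x b'‖ ≤ M := fun x hx => hK x hx b' hb'
  have h₁ : ‖K a b - K a b'‖ ≤ r :=
    (norm_sub_le_uniformDistOn (K := fun b a => K a b) hKb hKb' ha).trans hbb'
  have h₂ : ‖K a' b' - K a' b‖ ≤ r := norm_sub_rev (K a' b) (K a' b') ▸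
    (norm_sub_le_uniformDistOn (K := fun b a => K a b) hKb hKb' ha').trans hbb'
  calc ‖K a b - K a' b‖ ≤ ‖K a b - K a b'‖ + ‖K a b' - K a' b‖ :=
        norm_sub_le_norm_sub_add_norm_sub _ _ _
    _ ≤ ‖K a b - K a b'‖ + (‖K a b' - K a' b'‖ + ‖K a' b' - K a' b‖) := by
        gcongr
        exact norm_sub_le_norm_sub_add_norm_sub _ _ _
    _ ≤ r + (ε + r) := by gcongr
    _ = 2 * r + ε := by ring

theorem chi0D_uniformDistOn_le [ProperSpace E] (hs : s.Nonempty) (ht : t.Nonempty)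
    (hK : ∀ a ∈ s, ∀ b ∈ t, ‖K a b‖ ≤ M) :
    chi0D (uniformDistOn K t) s ≤ 2 * chi0D (uniformDistOn (fun b a => K a b) s) t := by
  have hM : 0 ≤ M := by
    obtain ⟨a, ha⟩ := hs
    obtain ⟨b, hb⟩ := ht
    exact (norm_nonneg _).trans (hK a ha b hb)
  have hcol_bdd : ∀ b ∈ t, ∀ b' ∈ t, uniformDistOn (fun b a => K a b) s b b' ≤ M + M :=
    fun b hb b' hb' => uniformDistOn_le hM (fun a ha => hK a ha b hb) (fun a ha => hK a ha b' hb')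
  suffices key : ∀ G ⊆ t, G.Finite → G.Nonempty → ∀ ε > 0,
      chi0D (uniformDistOn K t) s ≤ 2 * hdD (uniformDistOn (fun b a => K a b) s) t G + ε by
    have : chi0D (uniformDistOn K t) s / 2 ≤ chi0D (uniformDistOn (fun b a => K a b) s) t :=
      le_chi0D ht fun G hGt hG hGne => by
        linarith [le_of_forall_pos_le_add (key G hGt hG hGne)]
    linarith
  intro G hGt hG hGne ε hε
  set r := hdD (uniformDistOn (fun b a => K a b) s) t G
  have hr : 0 ≤ r := hdD_nonneg uniformDistOn_nonneg
  have : Fintype G := hG.fintype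
  have hbdd : Bornology.IsBounded ((fun a (g : G) => K a g) '' s) := by
    refine isBounded_iff_forall_norm_le.2 ⟨M, ?_⟩
    rintro _ ⟨a, ha, rfl⟩
    exact (pi_norm_le_iff_of_nonneg hM).2 fun g => hK a ha g (hGt g.2)
  obtain ⟨F, hFs, hF, hFne, hFnear⟩ := exists_finite_subset_forall_norm_sub_lt _ hs hbdd hε
  refine (chi0D_le_hdD uniformDistOn_nonneg hFs hF hFne).trans
    (hdD_le hF (by positivity) fun a ha => ?_)
  obtain ⟨f, hf, hafG⟩ := hFnear a ha
  refine ⟨f, hf, Real.iSup_le (fun b => ?_) (by positivity)⟩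
  obtain ⟨g, hg, hbg⟩ := exists_le_hdD hG hGne (fun b hb g hg => hcol_bdd b hb g (hGt hg)) b.2
  exact norm_sub_le_of_uniformDistOn_le hK ha (hFs hf) b.2 (hGt hg) hbg (hafG ⟨g, hg⟩).le

end UniformDistOn

section Dual

variable {𝕜 : Type*} [RCLike 𝕜] {X Y : Type*} [NormedAddCommGroup X] [NormedSpace 𝕜 X]
  [NormedAddCommGroup Y] [NormedSpace 𝕜 Y]

theorem norm_apply_le_of_mem_closedBall_one {ψ : StrongDual 𝕜 Y}
    (hψ : ψ ∈ closedBall (0 : StrongDual 𝕜 Y) 1) (y : Y) : ‖ψ y‖ ≤ ‖y‖ :=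
  (ψ.le_of_opNorm_le (mem_closedBall_zero_iff.1 hψ) y).trans_eq (one_mul _)

theorem norm_eq_iSup_closedBall_dual (y : Y) :
    ‖y‖ = ⨆ ψ : closedBall (0 : StrongDual 𝕜 Y) 1, ‖(ψ : StrongDual 𝕜 Y) y‖ := by
  refine le_antisymm ?_ (Real.iSup_le (fun ψ => norm_apply_le_of_mem_closedBall_one ψ.2 y)
    (norm_nonneg y))
  obtain ⟨g, hg, hgy⟩ := exists_dual_vector'' 𝕜 y
  refine le_ciSup_of_le ⟨‖y‖, forall_mem_range.2 fun ψ => norm_apply_le_of_mem_closedBall_one ψ.2 y⟩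
    ⟨g, mem_closedBall_zero_iff.2 hg⟩ ?_
  rw [hgy, RCLike.norm_ofReal, abs_norm]

theorem adjointBallImage_eq_image (T : X →L[𝕜] Y) :
    adjointBallImage 𝕜 T = (fun ψ : StrongDual 𝕜 Y => ψ.comp T) '' closedBall 0 1 := by
  ext φ
  simp [adjointBallImage, eq_comm]

theorem chi0D_dist_image_eq_chi0D_uniformDistOn (T : X →L[𝕜] Y) (A : Set X) :
    chi0D dist (T '' A) =
      chi0D (uniformDistOn (fun x (ψ : StrongDual 𝕜 Y) => ψ (T x)) (closedBall 0 1)) A := by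
  rw [chi0D_image]
  congr with x x'
  rw [dist_eq_norm, norm_eq_iSup_closedBall_dual (𝕜 := 𝕜)]
  simp only [uniformDistOn, map_sub]

theorem chi0D_restrict_adjointBallImage_eq_chi0D_uniformDistOn (T : X →L[𝕜] Y) (A : Set X) :
    chi0D (fun u v : ↥A → 𝕜 => ⨆ a : A, ‖u a - v a‖)
        ((fun φ : StrongDual 𝕜 X => fun a : A => φ (a : X)) '' adjointBallImage 𝕜 T) =
      chi0D (uniformDistOn (fun (ψ : StrongDual 𝕜 Y) x => ψ (T x)) A) (closedBall 0 1) := by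
  rw [adjointBallImage_eq_image, image_image, chi0D_image]
  rfl

end Dual

theorem chi0_image_equiv_chi0_restricted_adjoint_ball_general
    {𝕜 : Type*} [RCLike 𝕜] {X Y : Type*}
    [NormedAddCommGroup X] [NormedSpace 𝕜 X]
    [NormedAddCommGroup Y] [NormedSpace 𝕜 Y]
    (T : X →L[𝕜] Y) (A : Set X) (hA : A.Nonempty) (hbdd : Bornology.IsBounded A) :
    (1 / 2) * chi0D dist (T '' A) ≤
        chi0D (fun u v : ↥A → 𝕜 => ⨆ a : A, ‖u a - v a‖)
          ((fun φ : StrongDual 𝕜 X => fun a : A => φ (a : X)) '' adjointBallImage 𝕜 T) ∧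
      chi0D (fun u v : ↥A → 𝕜 => ⨆ a : A, ‖u a - v a‖)
          ((fun φ : StrongDual 𝕜 X => fun a : A => φ (a : X)) '' adjointBallImage 𝕜 T) ≤
        2 * chi0D dist (T '' A) := by
  obtain ⟨M, hM⟩ := hbdd.exists_norm_le
  have hB : (closedBall (0 : StrongDual 𝕜 Y) 1).Nonempty := nonempty_closedBall.2 zero_le_one
  have hK : ∀ x ∈ A, ∀ ψ ∈ closedBall (0 : StrongDual 𝕜 Y) 1, ‖ψ (T x)‖ ≤ ‖T‖ * M :=
    fun x hx ψ hψ => (norm_apply_le_of_mem_closedBall_one hψ _).trans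
      (T.le_of_opNorm_le_of_le le_rfl (hM x hx))
  rw [chi0D_dist_image_eq_chi0D_uniformDistOn,
    chi0D_restrict_adjointBallImage_eq_chi0D_uniformDistOn]
  constructor
  · linarith [chi0D_uniformDistOn_le hA hB hK]
  · exact chi0D_uniformDistOn_le hB hA fun ψ hψ x hx => hK x hx ψ hψ

/-- Let `T : X → Y` be an operator between Banach spaces, `A ⊆ X` nonempty bounded,
and `ψ : X* → ℓ∞(A)` the restriction map. Then
`(1/2)·χ₀(T(A)) ≤ χ₀(ψ(T*(B_{Y*}))) ≤ 2·χ₀(T(A))`. -/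
theorem chi0_image_equiv_chi0_restricted_adjoint_ball
    {𝕜 : Type*} [RCLike 𝕜] {X Y : Type*}
    [NormedAddCommGroup X] [NormedSpace 𝕜 X] [CompleteSpace X]
    [NormedAddCommGroup Y] [NormedSpace 𝕜 Y] [CompleteSpace Y]
    (T : X →L[𝕜] Y) (A : Set X) (hA : A.Nonempty) (hbdd : Bornology.IsBounded A) :
    (1 / 2) * chi0D dist (T '' A) ≤
        chi0D (fun u v : ↥A → 𝕜 => ⨆ a : A, ‖u a - v a‖)
          ((fun φ : StrongDual 𝕜 X => fun a : A => φ (a : X)) '' adjointBallImage 𝕜 T) ∧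
      chi0D (fun u v : ↥A → 𝕜 => ⨆ a : A, ‖u a - v a‖)
          ((fun φ : StrongDual 𝕜 X => fun a : A => φ (a : X)) '' adjointBallImage 𝕜 T) ≤
        2 * chi0D dist (T '' A) :=
  chi0_image_equiv_chi0_restricted_adjoint_ball_general T A hA hbdd
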